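/- Let S, S_lin : ℝ^n → ℝ³ (n ≥ 2) be C² maps such that pointwise |S| = 1 and ⟨S, S_lin⟩ = 0, and fix two coordinate indices 1, 2 with partial derivatives ∂₁, ∂₂. Then pointwise one has the identity ⟨S_lin, ∂₁S × ∂₂S⟩ + ⟨S, ∂₁S_lin × ∂₂S⟩ + ⟨S, ∂₁S × ∂₂S_lin⟩ = ∂₁ ⟨S, S_lin × ∂₂S⟩ − ∂₂ ⟨S, S_lin × ∂₁S⟩. -/

import Mathlib

open Matrix

/-- Partial derivative of `f` in the `α`-th coordinate direction. -/
noncomputable def pd {n : ℕ} {E : Type*} [NormedAddCommGroup E] [NormedSpace ℝ E]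
    (f : (Fin n → ℝ) → E) (α : Fin n) (p : Fin n → ℝ) : E :=
  fderiv ℝ f p (Pi.single α 1)

/-! Expanding both sides by the product rule, the second derivatives cancel since
`∂₁∂₂S = ∂₂∂₁S`, and what remains differs by triple products of `S_lin, ∂₁S, ∂₂S`.
These three vectors are orthogonal to the unit vector `S` (differentiate `⟨S, S⟩ = 1`),
hence lie in a plane, so all their triple products vanish. -/

section TripleProduct

variable {R : Type*} [CommRing R]

/-- `s ⬝ᵥ` of the identity `(s⬝u) v×w + (s⬝v) w×u + (s⬝w) u×v = det(u, v, w) s`. -/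
theorem dotProduct_self_mul_triple_product (s u v w : Fin 3 → R) :
    (s ⬝ᵥ s) * (u ⬝ᵥ v ⨯₃ w) =
      (s ⬝ᵥ u) * (s ⬝ᵥ v ⨯₃ w) + (s ⬝ᵥ v) * (s ⬝ᵥ w ⨯₃ u) + (s ⬝ᵥ w) * (s ⬝ᵥ u ⨯₃ v) := by
  simp only [cross_apply, dotProduct, Fin.sum_univ_three, cons_val_zero, cons_val_one,
    cons_val_two, head_cons, tail_cons]
  ring

theorem triple_product_eq_zero_of_dotProduct_eq_zero [NoZeroDivisors R] {s u v w : Fin 3 → R}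
    (hs : s ⬝ᵥ s ≠ 0) (hu : s ⬝ᵥ u = 0) (hv : s ⬝ᵥ v = 0) (hw : s ⬝ᵥ w = 0) :
    u ⬝ᵥ v ⨯₃ w = 0 := by
  have h := dotProduct_self_mul_triple_product s u v w
  rw [hu, hv, hw] at h
  simpa [hs] using h

end TripleProduct

section PartialDerivative

variable {n : ℕ} {E F G : Type*} [NormedAddCommGroup E] [NormedSpace ℝ E]
  [NormedAddCommGroup F] [NormedSpace ℝ F] [NormedAddCommGroup G] [NormedSpace ℝ G]
  {p : Fin n → ℝ}

theorem pd_bilinear (B : E →L[ℝ] F →L[ℝ] G) {f : (Fin n → ℝ) → E} {g : (Fin n → ℝ) → F}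
    (hf : DifferentiableAt ℝ f p) (hg : DifferentiableAt ℝ g p) (i : Fin n) :
    pd (fun q => B (f q) (g q)) i p = B (pd f i p) (g p) + B (f p) (pd g i p) := by
  simp only [pd, B.fderiv_of_bilinear hf hg, _root_.add_apply,
    ContinuousLinearMap.precompR_apply, ContinuousLinearMap.precompL_apply,
    ContinuousLinearMap.compL_apply, ContinuousLinearMap.comp_apply]
  exact add_comm _ _

theorem pd_dotProduct {ι : Type*} [Fintype ι] {f g : (Fin n → ℝ) → ι → ℝ}
    (hf : DifferentiableAt ℝ f p) (hg : DifferentiableAt ℝ g p) (i : Fin n) :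
    pd (fun q => f q ⬝ᵥ g q) i p = pd f i p ⬝ᵥ g p + f p ⬝ᵥ pd g i p :=
  pd_bilinear (dotProductBilin (m := ι) (A := ℝ) ℝ ℝ).toContinuousBilinearMap hf hg i

theorem pd_crossProduct {f g : (Fin n → ℝ) → Fin 3 → ℝ}
    (hf : DifferentiableAt ℝ f p) (hg : DifferentiableAt ℝ g p) (i : Fin n) :
    pd (fun q => f q ⨯₃ g q) i p = pd f i p ⨯₃ g p + f p ⨯₃ pd g i p :=
  pd_bilinear (crossProduct (R := ℝ)).toContinuousBilinearMap hf hg i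

theorem DifferentiableAt.crossProduct {f g : (Fin n → ℝ) → Fin 3 → ℝ}
    (hf : DifferentiableAt ℝ f p) (hg : DifferentiableAt ℝ g p) :
    DifferentiableAt ℝ (fun q => f q ⨯₃ g q) p :=
  (differentiableAt_const (_root_.crossProduct (R := ℝ)).toContinuousBilinearMap).clm_apply hf
    |>.clm_apply hg

theorem dotProduct_pd_eq_zero_of_dotProduct_self_const {ι : Type*} [Fintype ι]
    {f : (Fin n → ℝ) → ι → ℝ} {c : ℝ} (hc : ∀ q, f q ⬝ᵥ f q = c)
    (hf : DifferentiableAt ℝ f p) (i : Fin n) :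
    f p ⬝ᵥ pd f i p = 0 := by
  have h := pd_dotProduct hf hf i
  have hconst : pd (fun _ : Fin n → ℝ => c) i p = 0 := by simp [pd]
  rw [show (fun q => f q ⬝ᵥ f q) = fun _ => c from funext hc, hconst,
    dotProduct_comm (pd f i p)] at h
  linarith

theorem pd_pd_comm {f : (Fin n → ℝ) → E} (hf : ContDiff ℝ 2 f) (i j : Fin n) :
    pd (pd f j) i p = pd (pd f i) j p := by
  have hf' : DifferentiableAt ℝ (fderiv ℝ f) p :=
    (hf.fderiv_right le_rfl).differentiable one_ne_zero p
  have hpd (i j : Fin n) :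
      pd (pd f j) i p = fderiv ℝ (fderiv ℝ f) p (Pi.single i 1) (Pi.single j 1) := by
    change fderiv ℝ (fun q => fderiv ℝ f q (Pi.single j 1)) p (Pi.single i 1) = _
    simp [fderiv_clm_apply hf' (differentiableAt_const _)]
  rw [hpd, hpd]
  exact hf.contDiffAt.isSymmSndFDerivAt (by simp) _ _

end PartialDerivative

theorem linearized_charge_density_divergence_form_general {n : ℕ}
    (S Slin : (Fin n → ℝ) → Fin 3 → ℝ)
    (hS : ContDiff ℝ 2 S) (hSlin : ContDiff ℝ 2 Slin)
    (hS1 : ∀ p, S p ⬝ᵥ S p = 1)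
    (hortho : ∀ p, S p ⬝ᵥ Slin p = 0)
    (i₁ i₂ : Fin n) :
    ∀ p : Fin n → ℝ,
      Slin p ⬝ᵥ crossProduct (pd S i₁ p) (pd S i₂ p)
        + S p ⬝ᵥ crossProduct (pd Slin i₁ p) (pd S i₂ p)
        + S p ⬝ᵥ crossProduct (pd S i₁ p) (pd Slin i₂ p) =
      pd (fun q => S q ⬝ᵥ crossProduct (Slin q) (pd S i₂ q)) i₁ p
        - pd (fun q => S q ⬝ᵥ crossProduct (Slin q) (pd S i₁ q)) i₂ p := by
  intro p
  have hSd : Differentiable ℝ S := hS.differentiable two_ne_zero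
  have hSlind : Differentiable ℝ Slin := hSlin.differentiable two_ne_zero
  have hpdS (i : Fin n) : Differentiable ℝ (pd S i) := fun q =>
    ((hS.fderiv_right le_rfl).differentiable one_ne_zero q).clm_apply (differentiableAt_const _)
  have hperp (i : Fin n) : S p ⬝ᵥ pd S i p = 0 :=
    dotProduct_pd_eq_zero_of_dotProduct_self_const hS1 (hSd p) i
  have htriple {u v w : Fin 3 → ℝ} (hu : S p ⬝ᵥ u = 0) (hv : S p ⬝ᵥ v = 0)
      (hw : S p ⬝ᵥ w = 0) : u ⬝ᵥ v ⨯₃ w = 0 :=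
    triple_product_eq_zero_of_dotProduct_eq_zero (by simp [hS1 p]) hu hv hw
  rw [pd_dotProduct (hSd p) ((hSlind p).crossProduct (hpdS i₂ p)),
    pd_crossProduct (hSlind p) (hpdS i₂ p),
    pd_dotProduct (hSd p) ((hSlind p).crossProduct (hpdS i₁ p)),
    pd_crossProduct (hSlind p) (hpdS i₁ p), pd_pd_comm hS i₁ i₂,
    htriple (hortho p) (hperp i₁) (hperp i₂), htriple (hperp i₁) (hortho p) (hperp i₂),
    htriple (hperp i₂) (hortho p) (hperp i₁), ← cross_anticomm (pd Slin i₂ p)]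
  simp only [dotProduct_add, dotProduct_neg]
  ring

/-- Divergence-form identity for the right-hand side of the linearized Poisson
equation of the Ishimori system:
`⟨S_lin, ∂₁S × ∂₂S⟩ + ⟨S, ∂₁S_lin × ∂₂S⟩ + ⟨S, ∂₁S × ∂₂S_lin⟩
  = ∂₁⟨S, S_lin × ∂₂S⟩ − ∂₂⟨S, S_lin × ∂₁S⟩`. -/
theorem linearized_charge_density_divergence_form {n : ℕ} (hn : 2 ≤ n)
    (S Slin : (Fin n → ℝ) → Fin 3 → ℝ)
    (hS : ContDiff ℝ 2 S) (hSlin : ContDiff ℝ 2 Slin)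
    (hS1 : ∀ p, S p ⬝ᵥ S p = 1)
    (hortho : ∀ p, S p ⬝ᵥ Slin p = 0)
    (i₁ i₂ : Fin n) (hi₁ : (i₁ : ℕ) = 0) (hi₂ : (i₂ : ℕ) = 1) :
    ∀ p : Fin n → ℝ,
      Slin p ⬝ᵥ crossProduct (pd S i₁ p) (pd S i₂ p)
        + S p ⬝ᵥ crossProduct (pd Slin i₁ p) (pd S i₂ p)
        + S p ⬝ᵥ crossProduct (pd S i₁ p) (pd Slin i₂ p) =
      pd (fun q => S q ⬝ᵥ crossProduct (Slin q) (pd S i₂ q)) i₁ p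
        - pd (fun q => S q ⬝ᵥ crossProduct (Slin q) (pd S i₁ q)) i₂ p :=
  linearized_charge_density_divergence_form_general S Slin hS hSlin hS1 hortho i₁ i₂
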